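/- arXiv:1203.2480 — 8 statements merged into one kernel-verified Lean document; each statement's English description precedes it below -/
import Mathlib

section
/- Let E be an n × n max-plus idempotent matrix with all diagonal entries equal to 0. Then E has tropical rank strictly less than n if and only if there exist indices i ≠ j with E_{ij} = -E_{ji}. -/
open scoped BigOperators

/-- Max-plus matrix product over ℝ. -/
noncomputable def tmul {n : ℕ} (A B : Fin n → Fin n → ℝ) : Fin n → Fin n → ℝ :=
  fun i j => ⨆ k, A i k + B k j

/-- Max-plus idempotency. -/
def IsTropIdem {n : ℕ} (A : Fin n → Fin n → ℝ) : Prop := tmul A A = A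

/-- Tropical permanent. -/
noncomputable def tperm {n : ℕ} (A : Fin n → Fin n → ℝ) : ℝ :=
  ⨆ σ : Equiv.Perm (Fin n), ∑ i, A i (σ i)

/-- The tropical permanent is attained by a unique permutation. -/
def UniqPerm {n : ℕ} (A : Fin n → Fin n → ℝ) : Prop :=
  ∃! σ : Equiv.Perm (Fin n), ∑ i, A i (σ i) = tperm A

/-- Tropical rank: the largest size of a square minor whose tropical
permanent is attained by a unique permutation. -/
noncomputable def tropRank {n : ℕ} (A : Fin n → Fin n → ℝ) : ℕ :=
  sSup {k : ℕ | ∃ r c : Fin k ↪ Fin n, UniqPerm (fun i j => A (r i) (c j))}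

/-- Column space: all max-plus linear combinations of the columns. -/
def colSpace {n : ℕ} (A : Fin n → Fin n → ℝ) : Set (Fin n → ℝ) :=
  {x | ∃ lam : Fin n → ℝ, ∀ i, x i = ⨆ j, lam j + A i j}

/-- Residuation distance δ(x,y) = max_k (x_k - y_k). -/
noncomputable def tdelta {n : ℕ} (x y : Fin n → ℝ) : ℝ := ⨆ k, (x k - y k)

/-- Residuation operator ⟨x∣y⟩ = min_k (y_k - x_k). -/
noncomputable def tresid {n : ℕ} (x y : Fin n → ℝ) : ℝ := ⨅ k, (y k - x k)

/-- Tropical Hilbert projective metric. -/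
noncomputable def tHilbert {n : ℕ} (x y : Fin n → ℝ) : ℝ :=
  (tdelta x y + tdelta y x) / 2

/-! Idempotency with zero diagonal gives the triangle inequality `E i k + E k j ≤ E i j`, so every
cycle of a permutation has weight `≤ 0` and the identity attains the tropical permanent `0`.
Any other optimal permutation has a cycle of weight `0`, and the triangle inequality turns it into
a 2-cycle with `E i j + E j i = 0`. An `n × n` minor is the whole matrix up to reordering rows and
columns, so full tropical rank means that the identity is the unique optimal permutation. -/

open Equiv Equiv.Perm

section PermWeight

variable {ι : Type*} [Fintype ι] [DecidableEq ι] {E : ι → ι → ℝ}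

/-- The swap splices `a` out of its cycle: `σ⁻¹ a → a → σ a` becomes `σ⁻¹ a → σ a`, `a ↦ a`. -/
lemma sum_swap_mul_apply (σ : Perm ι) {a : ι} (ha : σ a ≠ a) :
    ∑ k, E k ((swap a (σ a) * σ) k) =
      ∑ k, E k (σ k) - E (σ⁻¹ a) a - E a (σ a) + E (σ⁻¹ a) (σ a) + E a a := by
  have hpa : σ⁻¹ a ≠ a := fun h => ha (by simpa using (congrArg σ h).symm)
  have hdiff := Fintype.sum_eq_add a (σ⁻¹ a) hpa.symm
    (f := fun k => E k ((swap a (σ a) * σ) k) - E k (σ k)) fun k ⟨hka, hkp⟩ => by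
      have hσk : σ k ≠ σ a := σ.injective.ne hka
      have hσk' : σ k ≠ a := fun h => hkp (by simp [← h])
      simp [swap_apply_of_ne_of_ne hσk' hσk]
  have hfix : (swap a (σ a) * σ) a = a := by simp
  have hpred : (swap a (σ a) * σ) (σ⁻¹ a) = σ a := by simp
  rw [Finset.sum_sub_distrib, hfix, hpred, show σ (σ⁻¹ a) = a by simp] at hdiff
  linarith

lemma sum_add_le_sum_swap_mul (htri : ∀ i k j, E i k + E k j ≤ E i j) (σ : Perm ι) {a : ι}
    (ha : σ a ≠ a) : ∑ k, E k (σ k) + E a a ≤ ∑ k, E k ((swap a (σ a) * σ) k) := by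
  rw [sum_swap_mul_apply σ ha]
  linarith [htri (σ⁻¹ a) a (σ a)]

lemma sum_apply_nonpos (htri : ∀ i k j, E i k + E k j ≤ E i j) (hdiag : ∀ i, E i i = 0)
    (σ : Perm ι) : ∑ k, E k (σ k) ≤ 0 := by
  induction h : σ.support.card using Nat.strong_induction_on generalizing σ with
  | _ m ih =>
    by_cases hσ : σ = 1
    · simp [hσ, hdiag]
    obtain ⟨a, ha⟩ : ∃ a, σ a ≠ a := not_forall.mp fun h => hσ (Equiv.ext h)
    calc ∑ k, E k (σ k) ≤ ∑ k, E k ((swap a (σ a) * σ) k) := by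
          simpa [hdiag] using sum_add_le_sum_swap_mul htri σ ha
      _ ≤ 0 := ih _ (h ▸ card_support_swap_mul ha) _ rfl

/-- Splicing out the predecessor of `i` shortens the cycle through `i` without decreasing the
weight, until it is the 2-cycle `i ↔ σ i`. -/
lemma sum_apply_le_add (htri : ∀ i k j, E i k + E k j ≤ E i j) (hdiag : ∀ i, E i i = 0)
    (σ : Perm ι) {i : ι} (hi : σ i ≠ i) : ∑ k, E k (σ k) ≤ E i (σ i) + E (σ i) i := by
  induction h : σ.support.card using Nat.strong_induction_on generalizing σ with
  | _ m ih =>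
    by_cases htwo : σ (σ i) = i
    · have hinv : σ⁻¹ i = σ i := by rw [inv_eq_iff_eq, htwo]
      have := sum_swap_mul_apply (E := E) σ hi
      rw [hinv, hdiag, hdiag] at this
      linarith [sum_apply_nonpos htri hdiag (swap i (σ i) * σ)]
    set a := σ⁻¹ i
    have hσa : σ a = i := by simp [a]
    have ha : σ a ≠ a := fun h => hi (by rwa [← h.symm.trans hσa])
    have hfix : (swap a (σ a) * σ) i = σ i := by
      rw [Perm.mul_apply, hσa, swap_apply_of_ne_of_ne _ hi]
      exact fun h => htwo (by rw [h, hσa])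
    calc ∑ k, E k (σ k) ≤ ∑ k, E k ((swap a (σ a) * σ) k) := by
          simpa [hdiag] using sum_add_le_sum_swap_mul htri σ ha
      _ ≤ E i (σ i) + E (σ i) i := by
          have := ih _ (h ▸ card_support_swap_mul ha) _ (hfix ▸ hi) rfl
          rwa [hfix] at this

end PermWeight

lemma IsTropIdem.add_le {n : ℕ} {E : Fin n → Fin n → ℝ} (h : IsTropIdem E) (i k j : Fin n) :
    E i k + E k j ≤ E i j :=
  (le_ciSup (Finite.bddAbove_range fun k => E i k + E k j) k).trans_eq (congrFun (congrFun h i) j)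

section TropicalPermanent

variable {n : ℕ} {E : Fin n → Fin n → ℝ}

lemma tperm_eq_zero (htri : ∀ i k j, E i k + E k j ≤ E i j) (hdiag : ∀ i, E i i = 0) :
    tperm E = 0 :=
  le_antisymm (ciSup_le fun σ => sum_apply_nonpos htri hdiag σ)
    (le_ciSup_of_le (Finite.bddAbove_range _) 1 (by simp [hdiag]))

lemma uniqPerm_iff_not_exists (htri : ∀ i k j, E i k + E k j ≤ E i j) (hdiag : ∀ i, E i i = 0) :
    UniqPerm E ↔ ¬∃ i j, i ≠ j ∧ E i j = -E j i := by
  have hone : ∑ k, E k ((1 : Perm (Fin n)) k) = 0 := by simp [hdiag]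
  rw [UniqPerm, tperm_eq_zero htri hdiag]
  refine ⟨fun ⟨_, _, huniq⟩ ⟨i, j, hij, hE⟩ => ?_, fun hno => ⟨1, hone, fun σ hσ => ?_⟩⟩
  · have hswap : ∑ k, E k (swap i j k) = 0 := by
      have := sum_swap_mul_apply (E := E) (swap i j) (a := i) (by simpa using hij.symm)
      simp only [swap_apply_left, swap_inv, swap_mul_self, hdiag] at this
      linarith
    have := congrArg (· i) ((huniq _ hswap).trans (huniq 1 hone).symm)
    exact hij (by simpa using this.symm)
  · by_contra hσ1
    obtain ⟨i, hi⟩ : ∃ i, σ i ≠ i := not_forall.mp fun h => hσ1 (Equiv.ext h)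
    refine hno ⟨i, σ i, hi.symm, ?_⟩
    linarith [sum_apply_le_add htri hdiag σ hi, htri i (σ i) i, hdiag i]

lemma uniqPerm_fin_zero (A : Fin 0 → Fin 0 → ℝ) : UniqPerm A :=
  ⟨1, by simp [tperm], fun σ _ => Subsingleton.elim σ 1⟩

lemma uniqPerm_submatrix_iff (A : Fin n → Fin n → ℝ) (re ce : Perm (Fin n)) :
    UniqPerm (fun i j => A (re i) (ce j)) ↔ UniqPerm A := by
  let f : Perm (Fin n) ≃ Perm (Fin n) := (Equiv.mulLeft ce).trans (Equiv.mulRight re⁻¹)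
  have hw : ∀ σ, ∑ i, A (re i) (ce (σ i)) = ∑ k, A k (f σ k) := fun σ =>
    Fintype.sum_equiv re _ _ fun i => by simp [f]
  have ht : tperm (fun i j => A (re i) (ce j)) = tperm A := by
    simp only [tperm, hw]
    exact f.iSup_comp (g := fun τ => ∑ k, A k (τ k))
  simp only [UniqPerm, ht, hw]
  exact f.existsUnique_congr_right (q := fun τ => ∑ k, A k (τ k) = tperm A)

lemma tropRank_lt_iff_not_uniqPerm (A : Fin n → Fin n → ℝ) : tropRank A < n ↔ ¬UniqPerm A := by
  set S := {k : ℕ | ∃ r c : Fin k ↪ Fin n, UniqPerm fun i j => A (r i) (c j)}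
  have hub : n ∈ upperBounds S := fun k ⟨r, _, _⟩ => by
    simpa using Fintype.card_le_of_embedding r
  have h0 : 0 ∈ S := ⟨.ofIsEmpty, .ofIsEmpty, uniqPerm_fin_zero _⟩
  rw [← not_le]
  refine not_congr ⟨fun h => ?_, fun h => le_csSup ⟨n, hub⟩ ⟨.refl _, .refl _, h⟩⟩
  have hmem := Nat.sSup_mem ⟨0, h0⟩ ⟨n, hub⟩
  rw [show sSup S = n from (csSup_le ⟨0, h0⟩ hub).antisymm h] at hmem
  obtain ⟨r, c, hrc⟩ := hmem
  exact (uniqPerm_submatrix_iff A (.ofBijective r r.injective.bijective_of_finite)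
    (.ofBijective c c.injective.bijective_of_finite)).mp hrc

end TropicalPermanent

theorem stmt1_general (n : ℕ) (E : Fin n → Fin n → ℝ)
    (hidem : IsTropIdem E) (hdiag : ∀ i, E i i = 0) :
    tropRank E < n ↔ ∃ i j, i ≠ j ∧ E i j = -E j i := by
  rw [tropRank_lt_iff_not_uniqPerm, uniqPerm_iff_not_exists hidem.add_le hdiag, not_not]

theorem stmt1 (n : ℕ) (hn : 0 < n) (E : Fin n → Fin n → ℝ)
    (hidem : IsTropIdem E) (hdiag : ∀ i, E i i = 0) :
    tropRank E < n ↔ ∃ i j, i ≠ j ∧ E i j = -E j i :=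
  stmt1_general n E hidem hdiag
end

section
/- Let E be an n × n max-plus idempotent matrix of tropical rank n (strongly regular). Then every diagonal entry of E equals 0. -/
open scoped BigOperators

/-! Idempotency makes `E` transitive, `E i k + E k j ≤ E i j`, with equality for some `k`.
If `σ` is the unique optimal permutation, trading `σ` for `σ ∘ (p q)` with `σ q = k` and
adding the transitivity inequality at `q, k, σ p` shows that `E p k + E k (σ p) < E p (σ p)`
for every `k ≠ σ p`. So the only way to attain `E p (σ p)` is through `k = σ p`, which forces
`E (σ p) (σ p) = 0`; as `σ` is onto, every diagonal entry vanishes. -/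

namespace IsTropIdem

variable {n : ℕ} {E : Fin n → Fin n → ℝ}

theorem add_le_s3 (hE : IsTropIdem E) (i k j : Fin n) : E i k + E k j ≤ E i j :=
  calc E i k + E k j ≤ tmul E E i j :=
      le_ciSup (f := fun k => E i k + E k j) (Set.finite_range _).bddAbove k
    _ = E i j := by rw [hE]

theorem exists_add_eq (hE : IsTropIdem E) (i j : Fin n) : ∃ k, E i j = E i k + E k j := by
  have : Nonempty (Fin n) := ⟨i⟩
  obtain ⟨k, hk⟩ := Finite.exists_max fun k => E i k + E k j
  refine ⟨k, le_antisymm ?_ (hE.add_le_s3 i k j)⟩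
  calc E i j = tmul E E i j := by rw [hE]
    _ ≤ E i k + E k j := ciSup_le hk

end IsTropIdem

theorem sum_le_tperm {n : ℕ} (A : Fin n → Fin n → ℝ) (σ : Equiv.Perm (Fin n)) :
    ∑ i, A i (σ i) ≤ tperm A :=
  le_ciSup (f := fun σ : Equiv.Perm (Fin n) => ∑ i, A i (σ i)) (Set.finite_range _).bddAbove σ

def IsStrictMaxPerm {n : ℕ} (A : Fin n → Fin n → ℝ) (σ : Equiv.Perm (Fin n)) : Prop :=
  ∀ τ : Equiv.Perm (Fin n), τ ≠ σ → ∑ i, A i (τ i) < ∑ i, A i (σ i)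

theorem uniqPerm_iff {n : ℕ} (A : Fin n → Fin n → ℝ) :
    UniqPerm A ↔ ∃ σ, IsStrictMaxPerm A σ := by
  constructor
  · rintro ⟨σ, hσ, huniq⟩
    refine ⟨σ, fun τ hτ => ?_⟩
    rw [hσ]
    exact (sum_le_tperm A τ).lt_of_ne fun h => hτ (huniq τ h)
  · rintro ⟨σ, hσ⟩
    have hmax : ∀ τ : Equiv.Perm (Fin n), ∑ i, A i (τ i) ≤ ∑ i, A i (σ i) := fun τ =>
      if h : τ = σ then h ▸ le_rfl else (hσ τ h).le
    have htperm : ∑ i, A i (σ i) = tperm A := (sum_le_tperm A σ).antisymm (ciSup_le hmax)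
    exact ⟨σ, htperm, fun τ hτ => by_contra fun hne => (hσ τ hne).ne (hτ.trans htperm.symm)⟩

theorem UniqPerm.of_reindex {n : ℕ} {A : Fin n → Fin n → ℝ} (e f : Fin n ≃ Fin n)
    (h : UniqPerm fun i j => A (e i) (f j)) : UniqPerm A := by
  rw [uniqPerm_iff] at h ⊢
  obtain ⟨σ, hσ⟩ := h
  refine ⟨e.symm.trans (σ.trans f), fun τ hτ => ?_⟩
  have hne : e.trans (τ.trans f.symm) ≠ σ := by
    rintro rfl
    exact hτ (Equiv.ext fun x => by simp)
  calc ∑ i, A i (τ i) = ∑ i, A (e i) (f (f.symm (τ (e i)))) := by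
        simpa using (e.sum_comp fun i => A i (τ i)).symm
    _ < ∑ i, A (e i) (f (σ i)) := hσ _ hne
    _ = ∑ i, A i (f (σ (e.symm i))) := by
        simpa using e.sum_comp fun i => A i (f (σ (e.symm i)))

theorem uniqPerm_of_tropRank_eq {n : ℕ} {A : Fin n → Fin n → ℝ} (h : tropRank A = n) :
    UniqPerm A := by
  set S := {k : ℕ | ∃ r c : Fin k ↪ Fin n, UniqPerm fun i j => A (r i) (c j)}
  have hzero : 0 ∈ S := by
    refine ⟨⟨Fin.elim0, fun a => a.elim0⟩, ⟨Fin.elim0, fun a => a.elim0⟩, ?_⟩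
    exact (uniqPerm_iff _).mpr ⟨1, fun τ hτ => (hτ (Subsingleton.elim τ 1)).elim⟩
  have hbdd : BddAbove S := ⟨n, fun k ⟨r, _, _⟩ => by simpa using Fintype.card_le_of_embedding r⟩
  obtain ⟨r, c, hrc⟩ : n ∈ S := h ▸ Nat.sSup_mem ⟨0, hzero⟩ hbdd
  exact hrc.of_reindex r.equivOfFiniteSelfEmbedding c.equivOfFiniteSelfEmbedding

namespace IsStrictMaxPerm

variable {n : ℕ} {A : Fin n → Fin n → ℝ} {σ : Equiv.Perm (Fin n)}

theorem add_lt_of_ne (hσ : IsStrictMaxPerm A σ) {p q : Fin n} (hpq : p ≠ q) :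
    A p (σ q) + A q (σ p) < A p (σ p) + A q (σ q) := by
  have hne : σ * Equiv.swap p q ≠ σ := fun h =>
    hpq (Equiv.swap_eq_one_iff.mp (mul_eq_left.mp h))
  have hdiff : ∑ i, (A i ((σ * Equiv.swap p q) i) - A i (σ i))
      = (A p (σ q) - A p (σ p)) + (A q (σ p) - A q (σ q)) := by
    rw [Fintype.sum_eq_add p q hpq fun x hx => by
      simp [Equiv.swap_apply_of_ne_of_ne hx.1 hx.2]]
    simp
  have hlt := hσ _ hne
  rw [Finset.sum_sub_distrib] at hdiff
  linarith

theorem add_lt_of_isTropIdem (hσ : IsStrictMaxPerm A σ) (hA : IsTropIdem A) {p k : Fin n}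
    (hk : k ≠ σ p) : A p k + A k (σ p) < A p (σ p) := by
  have hpq : p ≠ σ.symm k := fun h => hk (by rw [h, Equiv.apply_symm_apply])
  have hswap := hσ.add_lt_of_ne hpq
  rw [Equiv.apply_symm_apply] at hswap
  linarith [hA.add_le_s3 (σ.symm k) k (σ p)]

theorem diag_eq_zero_of_isTropIdem (hσ : IsStrictMaxPerm A σ) (hA : IsTropIdem A)
    (p : Fin n) : A (σ p) (σ p) = 0 := by
  obtain ⟨k, hk⟩ := hA.exists_add_eq p (σ p)
  obtain rfl : k = σ p := by
    by_contra hne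
    exact (hσ.add_lt_of_isTropIdem hA hne).ne hk.symm
  linarith

end IsStrictMaxPerm

theorem stmt3_general (n : ℕ) (E : Fin n → Fin n → ℝ)
    (hidem : IsTropIdem E) (hrank : tropRank E = n) :
    ∀ i, E i i = 0 := by
  obtain ⟨σ, hσ⟩ := (uniqPerm_iff E).mp (uniqPerm_of_tropRank_eq hrank)
  intro i
  simpa using hσ.diag_eq_zero_of_isTropIdem hidem (σ.symm i)

theorem stmt3 (n : ℕ) (hn : 0 < n) (E : Fin n → Fin n → ℝ)
    (hidem : IsTropIdem E) (hrank : tropRank E = n) :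
    ∀ i, E i i = 0 :=
  stmt3_general n E hidem hrank
end

section
/- Let E be an n × n max-plus idempotent matrix with all diagonal entries equal to 0, with rows r_1,…,r_n and columns c_1,…,c_n viewed as vectors in ℝⁿ. Then for all i and j, E_{ij} = ⟨r_j | r_i⟩ = ⟨c_i | c_j⟩, where ⟨x | y⟩ = min_k (y_k - x_k). -/
open scoped BigOperators

theorem stmt5 (n : ℕ) (hn : 0 < n) (E : Fin n → Fin n → ℝ)
    (hidem : IsTropIdem E) (hdiag : ∀ i, E i i = 0) :
    ∀ i j, E i j = tresid (fun k => E j k) (fun k => E i k) ∧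
           E i j = tresid (fun k => E k i) (fun k => E k j) := by

  have : Nonempty (Fin n) := ⟨⟨0, hn⟩⟩
  have key : ∀ a b c, E a b + E b c ≤ E a c := by
    intro a b c
    have h := congrFun (congrFun hidem a) c
    calc E a b + E b c ≤ ⨆ k, E a k + E k c :=
          le_ciSup (f := fun k => E a k + E k c) (Set.Finite.bddAbove (Set.finite_range _)) b
      _ = E a c := h
  intro i j
  constructor
  · apply le_antisymm
    · apply le_ciInf
      intro k
      have := key i j k
      linarith
    · calc tresid (fun k => E j k) (fun k => E i k)
            ≤ E i j - E j j := ciInf_le (Set.Finite.bddBelow (Set.finite_range _)) j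
        _ = E i j := by rw [hdiag]; ring
  · apply le_antisymm
    · apply le_ciInf
      intro k
      have := key k i j
      linarith
    · calc tresid (fun k => E k i) (fun k => E k j)
            ≤ E i j - E i i := ciInf_le (Set.Finite.bddBelow (Set.finite_range _)) i
        _ = E i j := by rw [hdiag]; ring
end

section
/- Let d be a semimetric on {1,…,n} and let D be the n × n matrix with D_{ij} = -d(i,j). Then the columns c_1,…,c_n of D form an antichain in ℝⁿ and the residuation distance satisfies δ(c_i, c_j) = d(i,j) for all i, j; in particular the map i ↦ c_i is an isometry from ({1,…,n}, d) to the columns of D with residuation distance. -/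
open scoped BigOperators

theorem stmt9 (n : ℕ) (hn : 0 < n) (d : Fin n → Fin n → ℝ)
    (hdiag : ∀ i, d i i = 0)
    (htri : ∀ i j k, d i j ≤ d i k + d k j)
    (hpos : ∀ i j, 0 ≤ d i j)
    (hne : ∀ i j, i ≠ j → d i j ≠ 0)
    (D : Fin n → Fin n → ℝ) (hD : ∀ i j, D i j = -d i j)
    (c : Fin n → (Fin n → ℝ)) (hc : ∀ j i, c j i = D i j) :
    (∀ i j, i ≠ j → ¬ c i ≤ c j) ∧
    (∀ i j, tdelta (c i) (c j) = d i j) ∧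
    Function.Injective c := by
  haveI : Nonempty (Fin n) := ⟨⟨0, hn⟩⟩
  have hanti : ∀ i j, i ≠ j → ¬ c i ≤ c j := by
    intro i j hij hle
    have h := hle i
    rw [hc, hc, hD, hD, hdiag] at h
    have : d i j ≤ 0 := by linarith
    exact hne i j hij (le_antisymm this (hpos i j))
  refine ⟨hanti, ?_, ?_⟩
  · intro i j
    unfold tdelta
    apply le_antisymm
    · apply ciSup_le
      intro k
      rw [hc, hc, hD, hD]
      have := htri k i j
      linarith [htri k j i, htri i k j]
    · have h := le_ciSup (f := fun k => c i k - c j k) (Finite.bddAbove_range _) i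
      rw [hc, hc, hD, hD, hdiag] at h
      simpa using h
  · intro i j hij
    by_contra h
    exact hanti i j h (le_of_eq hij)
end

section
/- Let d be a metric on {1,…,n} and let D be the n × n matrix with D_{ij} = -d(i,j), with columns c_1,…,c_n ∈ ℝⁿ. Then the tropical Hilbert projective metric satisfies d_H(c_i, c_j) = d(i,j) for all i, j, where d_H(x,y) = (max_k(x_k - y_k) + max_k(y_k - x_k))/2. -/
open scoped BigOperators

theorem stmt10 (n : ℕ) (hn : 0 < n) (d : Fin n → Fin n → ℝ)
    (hdiag : ∀ i, d i i = 0)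
    (hsymm : ∀ i j, d i j = d j i)
    (htri : ∀ i j k, d i j ≤ d i k + d k j)
    (hpos : ∀ i j, 0 ≤ d i j)
    (hne : ∀ i j, i ≠ j → d i j ≠ 0)
    (D : Fin n → Fin n → ℝ) (hD : ∀ i j, D i j = -d i j)
    (c : Fin n → (Fin n → ℝ)) (hc : ∀ j i, c j i = D i j) :
    ∀ i j, tHilbert (c i) (c j) = d i j := by
  have hNE : Nonempty (Fin n) := ⟨⟨0, hn⟩⟩
  have key : ∀ i j, tdelta (c i) (c j) = d i j := by
    intro i j
    unfold tdelta
    apply le_antisymm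
    · apply ciSup_le
      intro k
      rw [hc, hc, hD, hD]
      have := htri k j i
      linarith [hsymm i j, hsymm k j]
    · have h := le_ciSup (f := fun k => c i k - c j k) (Set.finite_range _).bddAbove i
      rw [hc, hc, hD, hD, hdiag i] at h
      simpa using h
  intro i j
  unfold tHilbert
  rw [key i j, key j i, hsymm j i]
  ring
end

section
/- Let d: [n] × [n] → ℝ be a function with matrix D = (-d(i,j)). Then d is a metric if and only if D is a symmetric max-plus idempotent of tropical rank n. -/
open scoped BigOperators

private lemma bddAbove_range_fin {α : Type*} [Finite α] (f : α → ℝ) :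
    BddAbove (Set.range f) := (Set.finite_range f).bddAbove

private lemma ciSup_attained {α : Type*} [Finite α] [Nonempty α] (f : α → ℝ) :
    ∃ a, (⨆ x, f x) = f a := by
  obtain ⟨a, ha⟩ := Finite.exists_max f
  exact ⟨a, le_antisymm (ciSup_le ha) (le_ciSup (bddAbove_range_fin f) a)⟩

private lemma uniqPerm_of_equiv {n : ℕ} (D : Fin n → Fin n → ℝ) (r c : Equiv.Perm (Fin n))
    (h : UniqPerm (fun i j => D (r i) (c j))) : UniqPerm D := by
  set M : Fin n → Fin n → ℝ := fun i j => D (r i) (c j) with hM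
  have hsum : ∀ σ : Equiv.Perm (Fin n), ∑ i, M i (σ i) = ∑ i, D i ((c * σ * r⁻¹) i) := by
    intro σ
    rw [← Equiv.sum_comp r (fun i => D i ((c * σ * r⁻¹) i))]
    refine Finset.sum_congr rfl fun i _ => ?_
    simp [M, Equiv.Perm.mul_apply]
  have htp : tperm M = tperm D := by
    unfold tperm
    apply le_antisymm
    · refine ciSup_le fun σ => ?_
      rw [hsum σ]
      exact le_ciSup (f := fun π : Equiv.Perm (Fin n) => ∑ i, D i (π i))
        (bddAbove_range_fin _) (c * σ * r⁻¹)
    · refine ciSup_le fun π => ?_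
      have h1 := hsum (c⁻¹ * π * r)
      have he : c * (c⁻¹ * π * r) * r⁻¹ = π := by group
      rw [he] at h1
      rw [← h1]
      exact le_ciSup (f := fun σ : Equiv.Perm (Fin n) => ∑ i, M i (σ i))
        (bddAbove_range_fin _) (c⁻¹ * π * r)
  obtain ⟨σ₀, hσ₀, huniq⟩ := h
  refine ⟨c * σ₀ * r⁻¹, ?_, fun π hπ => ?_⟩
  · show ∑ i, D i ((c * σ₀ * r⁻¹) i) = tperm D
    rw [← hsum σ₀, hσ₀, htp]
  · have hπ' : ∑ i, D i (π i) = tperm D := hπ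
    have h1 : ∑ i, M i ((c⁻¹ * π * r) i) = tperm M := by
      rw [hsum (c⁻¹ * π * r)]
      have he : c * (c⁻¹ * π * r) * r⁻¹ = π := by group
      rw [he, htp]
      exact hπ'
    have h2 := huniq _ h1
    rw [← h2]
    group

theorem stmt14 (n : ℕ) (hn : 0 < n) (d : Fin n → Fin n → ℝ)
    (D : Fin n → Fin n → ℝ) (hD : ∀ i j, D i j = -d i j) :
    ((∀ i, d i i = 0) ∧ (∀ i j, d i j = d j i) ∧
     (∀ i j, 0 ≤ d i j) ∧ (∀ i j, i ≠ j → d i j ≠ 0) ∧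
     (∀ i j k, d i j ≤ d i k + d k j)) ↔
    (IsTropIdem D ∧ (∀ i j, D i j = D j i) ∧ tropRank D = n) := by
  have hni : Nonempty (Fin n) := Fin.pos_iff_nonempty.mp hn
  constructor
  · rintro ⟨hdiag, hsym, hnonneg, hpos, htri⟩
    have hDle : ∀ i j, D i j ≤ 0 := fun i j => by
      rw [hD]; simpa using hnonneg i j
    have hDdiag : ∀ i, D i i = 0 := fun i => by rw [hD, hdiag]; ring
    refine ⟨?_, fun i j => by rw [hD, hD, hsym], ?_⟩
    · -- idempotency
      funext i j
      show (⨆ k, D i k + D k j) = D i j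
      apply le_antisymm
      · refine ciSup_le fun k => ?_
        rw [hD, hD, hD]
        have := htri i j k
        linarith
      · have h1 := le_ciSup (bddAbove_range_fin (fun k => D i k + D k j)) i
        rw [hDdiag i, zero_add] at h1
        exact h1
    · -- tropical rank
      have hU : UniqPerm D := by
        have hs1 : ∑ i, D i ((1 : Equiv.Perm (Fin n)) i) = 0 := by
          simp only [Equiv.Perm.one_apply]
          rw [Finset.sum_eq_zero]
          intro i _
          exact hDdiag i
        have hle : ∀ σ : Equiv.Perm (Fin n), ∑ i, D i (σ i) ≤ 0 := fun σ =>
          Finset.sum_nonpos fun i _ => hDle i (σ i)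
        have htp : tperm D = 0 := by
          unfold tperm
          apply le_antisymm
          · exact ciSup_le hle
          · rw [← hs1]
            exact le_ciSup (f := fun σ : Equiv.Perm (Fin n) => ∑ i, D i (σ i))
              (bddAbove_range_fin _) 1
        refine ⟨1, show ∑ i, D i ((1 : Equiv.Perm (Fin n)) i) = tperm D by
          rw [hs1, htp], fun σ hσ => ?_⟩
        replace hσ : ∑ i, D i (σ i) = tperm D := hσ
        rw [htp] at hσ
        have hd0 : ∑ i, d i (σ i) = 0 := by
          have : ∑ i, D i (σ i) = -∑ i, d i (σ i) := by
            rw [← Finset.sum_neg_distrib]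
            exact Finset.sum_congr rfl fun i _ => hD i (σ i)
          rw [this] at hσ
          linarith
        have hall := (Finset.sum_eq_zero_iff_of_nonneg
          (fun i _ => hnonneg i (σ i))).mp hd0
        ext i
        simp only [Equiv.Perm.one_apply]
        by_contra hne
        exact hpos i (σ i) (fun he => hne (congrArg Fin.val he.symm)) (hall i (Finset.mem_univ i))
      have hmem : n ∈ {k : ℕ | ∃ r c : Fin k ↪ Fin n,
          UniqPerm (fun i j => D (r i) (c j))} :=
        ⟨Function.Embedding.refl _, Function.Embedding.refl _, hU⟩
      have hub : ∀ k ∈ {k : ℕ | ∃ r c : Fin k ↪ Fin n,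
          UniqPerm (fun i j => D (r i) (c j))}, k ≤ n := by
        rintro k ⟨r, c, _⟩
        simpa using Fintype.card_le_of_embedding r
      exact le_antisymm (csSup_le ⟨n, hmem⟩ hub) (le_csSup ⟨n, hub⟩ hmem)
  · rintro ⟨hidem, hsym, hrank⟩
    -- basic consequences of idempotency
    have heq : ∀ i j, (⨆ k, D i k + D k j) = D i j := fun i j =>
      congrFun (congrFun hidem i) j
    have htri : ∀ i j k, D i k + D k j ≤ D i j := fun i j k => by
      rw [← heq i j]
      exact le_ciSup (bddAbove_range_fin (fun k => D i k + D k j)) k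
    have hatt : ∀ i j, ∃ k, D i j = D i k + D k j := fun i j => by
      obtain ⟨k, hk⟩ := ciSup_attained (fun k => D i k + D k j)
      exact ⟨k, by rw [← heq i j]; exact hk⟩
    have hdd : ∀ i k, D i k + D i k ≤ D i i := fun i k => by
      have := htri i i k
      rw [hsym k i] at this
      linarith
    have hkey : ∀ i j, D i j + D i j ≤ D i i + D j j := fun i j => by
      obtain ⟨k, hk⟩ := hatt i j
      have h1 := hdd i k
      have h2 := hdd j k
      rw [hsym j k] at h2
      linarith
    have hsmax : ∀ σ : Equiv.Perm (Fin n),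
        ∑ i, D i (σ i) ≤ ∑ i, D i i := by
      intro σ
      have h1 : ∑ i, (D i (σ i) + D i (σ i)) ≤ ∑ i, (D i i + D (σ i) (σ i)) :=
        Finset.sum_le_sum fun i _ => hkey i (σ i)
      rw [Finset.sum_add_distrib, Finset.sum_add_distrib,
        Equiv.sum_comp σ (fun i => D i i)] at h1
      linarith
    -- extract UniqPerm D from the rank condition
    have hUD : UniqPerm D := by
      set S := {k : ℕ | ∃ r c : Fin k ↪ Fin n,
          UniqPerm (fun i j => D (r i) (c j))} with hS
      have hub : ∀ k ∈ S, k ≤ n := by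
        rintro k ⟨r, c, _⟩
        simpa using Fintype.card_le_of_embedding r
      have hSne : S.Nonempty := by
        by_contra hcon
        rw [Set.not_nonempty_iff_eq_empty] at hcon
        have : tropRank D = 0 := by
          unfold tropRank
          rw [← hS, hcon]
          exact csSup_empty
        omega
      have hmem : n ∈ S := hrank ▸ Nat.sSup_mem hSne ⟨n, hub⟩
      obtain ⟨r, c, hU⟩ := hmem
      have hr : Function.Bijective r := Finite.injective_iff_bijective.mp r.injective
      have hc : Function.Bijective c := Finite.injective_iff_bijective.mp c.injective
      exact uniqPerm_of_equiv D (Equiv.ofBijective r hr) (Equiv.ofBijective c hc) hU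
    obtain ⟨π, hπ, huniq⟩ := hUD
    have htp : tperm D = ∑ i, D i i := by
      unfold tperm
      apply le_antisymm
      · refine ciSup_le fun σ => hsmax σ
      · have := le_ciSup (f := fun σ : Equiv.Perm (Fin n) => ∑ i, D i (σ i))
          (bddAbove_range_fin _) 1
        simpa using this
    have hone : ∀ σ : Equiv.Perm (Fin n), ∑ i, D i (σ i) = ∑ i, D i i → σ = 1 := by
      intro σ hσ
      have h1 : (1 : Equiv.Perm (Fin n)) = π := huniq 1
        (show ∑ i, D i ((1 : Equiv.Perm (Fin n)) i) = tperm D by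
          simpa using htp.symm)
      have h2 : σ = π := huniq σ
        (show ∑ i, D i (σ i) = tperm D by rw [hσ, htp])
      rw [h2, ← h1]
    -- sum difference for a swap
    have hswap : ∀ i k : Fin n, i ≠ k →
        ∑ j, D j ((Equiv.swap i k) j) =
          (∑ j, D j j) + (D i k + D k i) - (D i i + D k k) := by
      intro i k hik
      have hout : ∀ x ∈ Finset.univ, x ∉ ({i, k} : Finset (Fin n)) →
          D x ((Equiv.swap i k) x) - D x x = 0 := by
        intro x _ hx
        simp only [Finset.mem_insert, Finset.mem_singleton, not_or] at hx
        rw [Equiv.swap_apply_of_ne_of_ne hx.1 hx.2]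
        ring
      have hsub : ∑ x ∈ ({i, k} : Finset (Fin n)),
            (D x ((Equiv.swap i k) x) - D x x)
          = ∑ x, (D x ((Equiv.swap i k) x) - D x x) :=
        Finset.sum_subset (Finset.subset_univ _) hout
      rw [Finset.sum_pair hik, Equiv.swap_apply_left, Equiv.swap_apply_right] at hsub
      rw [Finset.sum_sub_distrib] at hsub
      linarith
    -- diagonal is zero
    have hdiag : ∀ i, D i i = 0 := by
      intro i
      obtain ⟨k, hk⟩ := hatt i i
      rw [hsym k i] at hk
      by_cases hik : i = k
      · rw [← hik] at hk; linarith
      · exfalso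
        have hkk : D k k ≤ 0 := by have := hdd k k; linarith
        have h1 := hswap i k hik
        have h2 : ∑ j, D j ((Equiv.swap i k) j) ≥ ∑ j, D j j := by
          rw [h1, hsym k i]
          linarith
        have h3 : ∑ j, D j ((Equiv.swap i k) j) = ∑ j, D j j :=
          le_antisymm (hsmax _) h2
        have h4 := hone _ h3
        have h5 : (Equiv.swap i k) i = i := by rw [h4]; rfl
        rw [Equiv.swap_apply_left] at h5
        exact hik h5.symm
    have hDle : ∀ i j, D i j ≤ 0 := by
      intro i j
      have := hkey i j
      rw [hdiag i, hdiag j] at this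
      linarith
    refine ⟨fun i => by have := hdiag i; rw [hD] at this; linarith,
      fun i j => by have := hsym i j; rw [hD, hD] at this; linarith,
      fun i j => by have := hDle i j; rw [hD] at this; linarith,
      fun i j hij => ?_,
      fun i j k => by have := htri i j k; rw [hD, hD, hD] at this; linarith⟩
    -- positivity off the diagonal
    intro hdij
    have hDij : D i j = 0 := by rw [hD, hdij]; ring
    have h1 := hswap i j hij
    have h2 : ∑ l, D l ((Equiv.swap i j) l) = ∑ l, D l l := by
      rw [h1, hdiag i, hdiag j, hDij, hsym j i, hDij]
      ring
    have h3 := hone _ h2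
    have h4 : (Equiv.swap i j) i = i := by rw [h3]; rfl
    rw [Equiv.swap_apply_left] at h4
    exact hij h4.symm
end

section
/- Let E be a max-plus idempotent in M_n(ℝ). Every extremal point of the column space C(E) is, up to tropical scaling (adding a constant to all coordinates), a column of E whose diagonal entry E_{jj} equals 0. -/
open scoped BigOperators

/-- A set of points of ℝⁿ is tropically convex if it is closed under
entrywise maximum and under adding a constant to all coordinates. -/
def TropClosed {n : ℕ} (X : Set (Fin n → ℝ)) : Prop :=
  (∀ x ∈ X, ∀ y ∈ X, (fun i => max (x i) (y i)) ∈ X) ∧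
  (∀ x ∈ X, ∀ l : ℝ, (fun i => l + x i) ∈ X)

/-- x is an extremal point of X. -/
def TropExtremal {n : ℕ} (X : Set (Fin n → ℝ)) (x : Fin n → ℝ) : Prop :=
  x ∈ X ∧ TropClosed (X \ {y | ∃ l : ℝ, y = fun i => l + x i})


section auxStmt18

variable {n : ℕ}

lemma le_tsup [Nonempty (Fin n)] (f : Fin n → ℝ) (k : Fin n) : f k ≤ ⨆ j, f j :=
  le_ciSup (Set.Finite.bddAbove (Set.finite_range f)) k

lemma tsup_attained [Nonempty (Fin n)] (f : Fin n → ℝ) : ∃ k, f k = ⨆ j, f j := by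
  obtain ⟨k, hk⟩ := Finite.exists_max f
  exact ⟨k, le_antisymm (le_tsup f k) (ciSup_le hk)⟩

lemma col_mem [Nonempty (Fin n)] (E : Fin n → Fin n → ℝ) (j : Fin n) (c : ℝ) :
    (fun i => c + E i j) ∈ colSpace E := by
  refine ⟨fun k => c + ⨅ i, (E i j - E i k), fun i => ?_⟩
  apply le_antisymm
  · have h1 : (fun k => (c + ⨅ i', (E i' j - E i' k)) + E i k) j = c + E i j := by
      simp [ciInf_const]
    calc c + E i j = _ := h1.symm
      _ ≤ ⨆ k, (c + ⨅ i', (E i' j - E i' k)) + E i k :=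
        le_tsup (fun k => (c + ⨅ i', (E i' j - E i' k)) + E i k) j
  · apply ciSup_le
    intro k
    show (c + ⨅ i', (E i' j - E i' k)) + E i k ≤ c + E i j
    have h1 : (⨅ i', (E i' j - E i' k)) ≤ E i j - E i k :=
      ciInf_le (Set.Finite.bddBelow (Set.finite_range _)) i
    linarith

lemma tsup_eq_sup' [Nonempty (Fin n)] (f : Fin n → ℝ) :
    (⨆ j, f j) = Finset.univ.sup' Finset.univ_nonempty f :=
  le_antisymm (ciSup_le fun k => Finset.le_sup' f (Finset.mem_univ k))
    (Finset.sup'_le _ _ fun k _ => le_tsup f k)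

lemma closed_sup' {X : Set (Fin n → ℝ)} (hX : TropClosed X)
    {m : ℕ} (s : Finset (Fin m)) (hs : s.Nonempty) (y : Fin m → Fin n → ℝ)
    (hy : ∀ k ∈ s, y k ∈ X) :
    (fun i => s.sup' hs (fun k => y k i)) ∈ X := by
  induction hs using Finset.Nonempty.cons_induction with
  | singleton a =>
      have : (fun i => ({a} : Finset (Fin m)).sup' (Finset.singleton_nonempty a)
          (fun k => y k i)) = y a := by
        funext i; simp
      rw [this]
      exact hy a (Finset.mem_singleton_self a)
  | cons a s h hs ih =>
      have hya : y a ∈ X := hy a (Finset.mem_cons_self a s)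
      have ih' := ih (fun k hk => hy k (Finset.mem_cons_of_mem hk))
      have := hX.1 (y a) hya _ ih'
      convert this using 1
      funext i
      simp [Finset.sup'_insert, hs]

end auxStmt18

theorem stmt18 (n : ℕ) (hn : 0 < n) (E : Fin n → Fin n → ℝ)
    (hidem : IsTropIdem E) :
    ∀ x : Fin n → ℝ, TropExtremal (colSpace E) x →
      ∃ j : Fin n, E j j = 0 ∧ ∃ l : ℝ, x = fun i => l + E i j := by
  classical
  haveI : Nonempty (Fin n) := ⟨⟨0, hn⟩⟩
  intro x hx
  obtain ⟨hxX, hclosed⟩ := hx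
  obtain ⟨lam, hlam⟩ := hxX
  have hidem' : ∀ i j, (⨆ k, E i k + E k j) = E i j := fun i j =>
    congrFun (congrFun hidem i) j
  have hE_le : ∀ i k j, E i k + E k j ≤ E i j := fun i k j =>
    (hidem' i j) ▸ le_tsup (fun k => E i k + E k j) k
  have hxRay : x ∈ {y : Fin n → ℝ | ∃ l : ℝ, y = fun i => l + x i} :=
    ⟨0, funext fun i => (zero_add _).symm⟩
  have step1 : ∃ j, (fun i => lam j + E i j) ∈
      {y : Fin n → ℝ | ∃ l : ℝ, y = fun i => l + x i} := by
    by_contra h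
    push_neg at h
    have hmem : (fun i => Finset.univ.sup' Finset.univ_nonempty
        (fun j => lam j + E i j)) ∈
        colSpace E \ {y : Fin n → ℝ | ∃ l : ℝ, y = fun i => l + x i} := by
      apply closed_sup' hclosed
      intro k _
      exact ⟨col_mem E k (lam k), h k⟩
    have hxeq : x = fun i => Finset.univ.sup' Finset.univ_nonempty
        (fun j => lam j + E i j) := by
      funext i; rw [hlam i, tsup_eq_sup']
    rw [← hxeq] at hmem
    exact hmem.2 hxRay
  obtain ⟨j, l, hjl⟩ := step1
  have hxc : ∀ i, x i = (lam j - l) + E i j := by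
    intro i
    have := congrFun hjl i
    linarith
  set c := lam j - l with hc
  by_cases hEj : E j j = 0
  · exact ⟨j, hEj, c, funext hxc⟩
  have hEjle : E j j ≤ 0 := by have := hE_le j j j; linarith
  have hEjlt : E j j < 0 := lt_of_le_of_ne hEjle hEj
  by_contra hg
  push_neg at hg
  set z : Fin n → Fin n → ℝ := fun k i => (c + E k j) + E i k with hzdef
  have hzle : ∀ k i, z k i ≤ x i := by
    intro k i
    have h1 := hE_le i k j
    have h2 := hxc i
    simp only [hzdef]
    linarith
  have hzray : ∀ k, z k ∈ {y : Fin n → ℝ | ∃ l : ℝ, y = fun i => l + x i} →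
      ∀ i, z k i < x i := by
    rintro k ⟨d, hd⟩ i
    have hdi : ∀ i', z k i' = d + x i' := fun i' => congrFun hd i'
    have hdle : d ≤ 0 := by have := hzle k i; have := hdi i; linarith
    have hdne : d ≠ 0 := by
      intro hd0
      have hEkk : E k k = 0 := by
        have h1 := hdi k
        have h2 := hxc k
        simp only [hzdef] at h1
        linarith
      refine hg k hEkk (c + E k j) (funext fun i' => ?_)
      have h1 := hdi i'
      simp only [hzdef] at h1
      linarith
    have := hdi i
    have : d < 0 := lt_of_le_of_ne hdle hdne
    have := hdi i
    linarith
  set Ray := {y : Fin n → ℝ | ∃ l : ℝ, y = fun i => l + x i} with hRaydef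
  set R : Finset (Fin n) := Finset.univ.filter (fun k => z k ∉ Ray) with hRdef
  have hattR : ∀ i, ∃ k ∈ R, z k i = x i := by
    intro i
    obtain ⟨k, hk⟩ := tsup_attained (fun k => E i k + E k j)
    rw [hidem' i j] at hk
    have hzk : z k i = x i := by
      simp only [hzdef]
      have := hxc i
      linarith
    refine ⟨k, ?_, hzk⟩
    simp only [hRdef, Finset.mem_filter, Finset.mem_univ, true_and]
    intro hray
    exact absurd hzk (ne_of_lt (hzray k hray i))
  have hRne : R.Nonempty := by
    obtain ⟨k, hk, _⟩ := hattR ⟨0, hn⟩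
    exact ⟨k, hk⟩
  have hsup : x = fun i => R.sup' hRne (fun k => z k i) := by
    funext i
    apply le_antisymm
    · obtain ⟨k, hk, hzk⟩ := hattR i
      calc x i = z k i := hzk.symm
        _ ≤ _ := Finset.le_sup' (fun k => z k i) hk
    · exact Finset.sup'_le _ _ fun k _ => hzle k i
  have hmem : (fun i => R.sup' hRne (fun k => z k i)) ∈ colSpace E \ Ray := by
    apply closed_sup' hclosed
    intro k hk
    refine ⟨?_, (Finset.mem_filter.mp hk).2⟩
    have : z k = fun i => (c + E k j) + E i k := hzdef ▸ rfl
    rw [this]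
    exact col_mem E k (c + E k j)
  rw [← hsup] at hmem
  exact hmem.2 hxRay
end

section
/- Let E be a max-plus idempotent in M_n(ℝ). Then the tropical rank of E is at most the number of indices i with E_{ii} = 0. -/
open scoped BigOperators

theorem stmt19 (n : ℕ) (hn : 0 < n) (E : Fin n → Fin n → ℝ)
    (hidem : IsTropIdem E) :
    tropRank E ≤ (Finset.univ.filter (fun i => E i i = 0)).card := by
  have : NeZero n := ⟨hn.ne'⟩
  -- basic consequences of idempotency
  have heq : ∀ a b : Fin n, (⨆ t, E a t + E t b) = E a b := by
    intro a b; exact congrFun (congrFun hidem a) b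
  have hE : ∀ a b t : Fin n, E a t + E t b ≤ E a b := by
    intro a b t
    rw [← heq a b]
    exact le_ciSup (f := fun t => E a t + E t b) (Set.finite_range _).bddAbove t
  have hdle : ∀ a : Fin n, E a a ≤ 0 := by
    intro a; have := hE a a a; linarith
  -- chain inequality
  have hchain : ∀ (t : ℕ → Fin n) (p q : ℕ), p < q →
      ∑ m ∈ Finset.Ico p q, E (t (m+1)) (t m) ≤ E (t q) (t p) := by
    intro t p q hpq
    induction q with
    | zero => omega
    | succ q ih =>
      rcases Nat.lt_or_ge p q with h | h
      · rw [Finset.sum_Ico_succ_top (by omega)]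
        calc ∑ m ∈ Finset.Ico p q, E (t (m+1)) (t m) + E (t (q+1)) (t q)
            ≤ E (t q) (t p) + E (t (q+1)) (t q) := by linarith [ih h]
          _ ≤ E (t (q+1)) (t p) := by linarith [hE (t (q+1)) (t p) (t q)]
      · have : p = q := by omega
        subst this
        simp
  -- every entry's decomposition attained at a diagonal-zero node
  have hkey : ∀ a b : Fin n, ∃ x : Fin n, E a x + E x b = E a b ∧ E x x = 0 := by
    intro a b
    -- attained maximizers
    have hmax : ∀ c : Fin n, ∃ x, E a x + E x c = E a c := by
      intro c
      obtain ⟨x, hx⟩ := exists_eq_ciSup_of_finite (f := fun t => E a t + E t c)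
      exact ⟨x, by rw [hx, heq]⟩
    choose g hg using hmax
    -- sequence of maximizers
    let t : ℕ → Fin n := fun m => Nat.rec (g b) (fun _ s => g s) m
    have ht0 : E a (t 0) + E (t 0) b = E a b := hg b
    have hts : ∀ m, E a (t (m+1)) + E (t (m+1)) (t m) = E a (t m) := fun m => hg (t m)
    -- telescoping
    have htel : ∀ p q : ℕ, p ≤ q →
        E a (t p) = E a (t q) + ∑ m ∈ Finset.Ico p q, E (t (m+1)) (t m) := by
      intro p q hpq
      induction q with
      | zero => interval_cases p; simp
      | succ q ih =>
        rcases Nat.lt_or_ge p (q+1) with h | h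
        · have hpq' : p ≤ q := by omega
          rw [Finset.sum_Ico_succ_top hpq']
          have := hts q
          have := ih hpq'
          linarith
        · have : p = q + 1 := by omega
          subst this; simp
    -- pigeonhole
    obtain ⟨p', q', hne, hpq⟩ := Fintype.exists_ne_map_eq_of_card_lt
      (fun m : Fin (n+1) => t m) (by simp)
    -- wlog p < q
    obtain ⟨p, q, hlt, heqt⟩ : ∃ p q : ℕ, p < q ∧ t p = t q := by
      rcases lt_or_gt_of_ne (show (p':ℕ) ≠ q' from fun h => hne (Fin.ext h)) with h | h
      · exact ⟨p', q', h, hpq⟩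
      · exact ⟨q', p', h, hpq.symm⟩
    have hsum0 : ∑ m ∈ Finset.Ico p q, E (t (m+1)) (t m) = 0 := by
      have := htel p q hlt.le
      rw [heqt] at this
      linarith
    have hge : (0:ℝ) ≤ E (t q) (t p) := by
      rw [← hsum0]; exact hchain t p q hlt
    rw [← heqt] at hge
    refine ⟨t p, ?_, le_antisymm (hdle _) hge⟩
    -- t p is a maximizer for (a, b): every t m is
    have hmaxall : ∀ m, E a (t m) + E (t m) b = E a b := by
      intro m
      induction m with
      | zero => exact ht0
      | succ m ih =>
        have h1 := hts m
        have h2 := hE (t (m+1)) b (t m)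
        have h3 := hE a b (t (m+1))
        linarith
    exact hmaxall p
  -- main argument
  unfold tropRank
  apply csSup_le'
  rintro k ⟨r, c, σ, hσ, huniq⟩
  set M : Fin k → Fin k → ℝ := fun i j => E (r i) (c j) with hM
  -- choose diagonal-zero witnesses
  choose x hx hxd using fun i : Fin k => hkey (r i) (c (σ i))
  -- injectivity of x
  have hinj : Function.Injective x := by
    intro i j hij
    by_contra hne
    set τ : Equiv.Perm (Fin k) := σ * Equiv.swap i j with hτ
    have hτi : τ i = σ j := by simp [hτ, Equiv.swap_apply_left]
    have hτj : τ j = σ i := by simp [hτ, Equiv.swap_apply_right]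
    have hτo : ∀ l, l ≠ i → l ≠ j → τ l = σ l := by
      intro l h1 h2; simp [hτ, Equiv.swap_apply_of_ne_of_ne h1 h2]
    have hτne : τ ≠ σ := by
      intro h
      apply hne
      have h2 : σ j = σ i := by rw [← hτi, h]
      exact (σ.injective h2).symm
    -- the swapped permutation is at least as good
    have hswap : ∑ l, M l (σ l) ≤ ∑ l, M l (τ l) := by
      have hdiff : ∑ l ∈ Finset.univ, (M l (τ l) - M l (σ l)) =
          ∑ l ∈ ({i, j} : Finset (Fin k)), (M l (τ l) - M l (σ l)) := by
        symm
        apply Finset.sum_subset (Finset.subset_univ _)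
        intro l _ hl
        simp only [Finset.mem_insert, Finset.mem_singleton, not_or] at hl
        rw [hτo l hl.1 hl.2]; ring
      have hpair : (0:ℝ) ≤ ∑ l ∈ ({i, j} : Finset (Fin k)), (M l (τ l) - M l (σ l)) := by
        rw [Finset.sum_pair hne]
        have e1 := hE (r i) (c (σ j)) (x i)
        have e2 := hE (r j) (c (σ i)) (x j)
        have e3 := hx i
        have e4 := hx j
        rw [hij] at e1 e3
        simp only [hM, hτi, hτj]
        linarith
      have h0 : (0:ℝ) ≤ ∑ l, (M l (τ l) - M l (σ l)) := hdiff ▸ hpair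
      rw [Finset.sum_sub_distrib] at h0
      linarith
    have htperm : ∑ l, M l (τ l) = tperm M := by
      apply le_antisymm
      · exact le_ciSup (f := fun σ' : Equiv.Perm (Fin k) => ∑ i, M i (σ' i))
          (Set.finite_range _).bddAbove τ
      · rw [← hσ]; exact hswap
    exact hτne (huniq τ htperm)
  -- count
  have : (Finset.univ : Finset (Fin k)).card ≤ (Finset.univ.filter (fun i => E i i = 0)).card := by
    apply Finset.card_le_card_of_injOn x
    · intro i _; simp [hxd i]
    · exact hinj.injOn
  simpa using this
end
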